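/- arXiv:2201.08536 — 2 statements merged into one kernel-verified Lean document; each statement's English description precedes it below -/
import Mathlib

section
/- Let γ ∈ (0,1) and let P, P̂₁, P̂₂ ∈ ℝ^{D×D} be row-stochastic matrices such that ||(P̂_i − P)v||_∞ ≤ ((1−γ)/√2)·||v||_∞ for every v ∈ ℝ^D and i = 1, 2. Then for every positive semidefinite matrix M ∈ ℝ^{D×D}, ||(I − γP̂₁)^{-1} M (I − γP̂₂)^{-⊤}||_diag ≤ 3·||(I − γP)^{-1} M (I − γP)^{-⊤}||_diag. -/
/-!
Put `A = I - γP`, `Aᵢ = I - γP̂ᵢ` and `B = A⁻¹ M A⁻ᵀ`, which is positive semidefinite. Then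
`A₁⁻¹ M A₂⁻ᵀ = C₁ B C₂ᵀ` with `Cᵢ = Aᵢ⁻¹ A = I + γ Aᵢ⁻¹ (P̂ᵢ - P)`. A stochastic matrix does not
increase the sup norm, so `(1 - γ) ‖v‖_∞ ≤ ‖Aᵢ v‖_∞`; with the perturbation bound this makes
`Cᵢ` an `ℓ^∞`-operator of norm at most `1 + γ/√2`, so every row of `Cᵢ` has `ℓ¹`-norm at most
`1 + γ/√2`. Every entry of the positive semidefinite `B` is bounded by `‖B‖_diag`, so each
diagonal entry of `C₁ B C₂ᵀ` is at most `(1 + γ/√2)² ‖B‖_diag ≤ 3 ‖B‖_diag`.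
-/

open Finset Matrix

noncomputable section

/-- A matrix is row-stochastic if its entries are nonnegative and its rows sum to one. -/
def RowStochastic {D : ℕ} (P : Matrix (Fin D) (Fin D) ℝ) : Prop :=
  (∀ i j, 0 ≤ P i j) ∧ (∀ i, ∑ j, P i j = 1)

/-- `‖A‖_diag`: the maximum absolute diagonal entry of a square matrix. -/
def diagNorm {D : ℕ} (A : Matrix (Fin D) (Fin D) ℝ) : ℝ := ⨆ i, |A i i|

namespace RowStochastic

variable {D : ℕ} {P Q : Matrix (Fin D) (Fin D) ℝ}

theorem norm_mulVec_le (hP : RowStochastic P) (v : Fin D → ℝ) : ‖P *ᵥ v‖ ≤ ‖v‖ := by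
  refine (pi_norm_le_iff_of_nonneg (norm_nonneg v)).2 fun i => ?_
  calc ‖(P *ᵥ v) i‖ = |∑ j, P i j * v j| := rfl
    _ ≤ ∑ j, P i j * ‖v‖ := by
        refine (abs_sum_le_sum_abs _ _).trans (sum_le_sum fun j _ => ?_)
        rw [abs_mul, abs_of_nonneg (hP.1 i j)]
        exact mul_le_mul_of_nonneg_left (norm_le_pi_norm v j) (hP.1 i j)
    _ = ‖v‖ := by rw [← sum_mul, hP.2 i, one_mul]

theorem one_sub_abs_mul_norm_le (hP : RowStochastic P) (γ : ℝ) (v : Fin D → ℝ) :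
    (1 - |γ|) * ‖v‖ ≤ ‖(1 - γ • P) *ᵥ v‖ := by
  have hv : v = (1 - γ • P) *ᵥ v + γ • (P *ᵥ v) := by
    rw [sub_mulVec, one_mulVec, smul_mulVec, sub_add_cancel]
  have := calc ‖v‖ = ‖(1 - γ • P) *ᵥ v + γ • (P *ᵥ v)‖ := congrArg norm hv
    _ ≤ ‖(1 - γ • P) *ᵥ v‖ + ‖γ • (P *ᵥ v)‖ := norm_add_le _ _
    _ ≤ ‖(1 - γ • P) *ᵥ v‖ + |γ| * ‖v‖ := by
        rw [norm_smul, Real.norm_eq_abs]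
        gcongr
        exact hP.norm_mulVec_le v
  linarith

theorem isUnit_det_one_sub_smul (hP : RowStochastic P) {γ : ℝ} (hγ : |γ| < 1) :
    IsUnit (1 - γ • P).det := by
  refine isUnit_iff_ne_zero.2 fun hdet => ?_
  obtain ⟨v, hv, hker⟩ := exists_mulVec_eq_zero_iff.2 hdet
  have := hP.one_sub_abs_mul_norm_le γ v
  rw [hker, norm_zero] at this
  exact hv (norm_le_zero_iff.1 (nonpos_of_mul_nonpos_right this (by linarith)))

theorem one_sub_abs_mul_norm_inv_mulVec_le (hP : RowStochastic P) {γ : ℝ} (hγ : |γ| < 1)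
    (u : Fin D → ℝ) : (1 - |γ|) * ‖(1 - γ • P)⁻¹ *ᵥ u‖ ≤ ‖u‖ := by
  have := hP.one_sub_abs_mul_norm_le γ ((1 - γ • P)⁻¹ *ᵥ u)
  rwa [mulVec_mulVec, mul_nonsing_inv _ (hP.isUnit_det_one_sub_smul hγ), one_mulVec] at this

theorem norm_inv_mul_mulVec_le (hQ : RowStochastic Q) {γ ε : ℝ}
    (hγ : |γ| < 1) (hQP : ∀ v, ‖(Q - P) *ᵥ v‖ ≤ ε * ‖v‖) (v : Fin D → ℝ) :
    ‖((1 - γ • Q)⁻¹ * (1 - γ • P)) *ᵥ v‖ ≤ (1 + |γ| * ε / (1 - |γ|)) * ‖v‖ := by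
  have hsplit : ((1 - γ • Q)⁻¹ * (1 - γ • P)) *ᵥ v =
      v + (1 - γ • Q)⁻¹ *ᵥ (γ • ((Q - P) *ᵥ v)) := by
    have : (1 : Matrix (Fin D) (Fin D) ℝ) - γ • P = (1 - γ • Q) + γ • (Q - P) := by
      rw [smul_sub]; abel
    rw [this, Matrix.mul_add, nonsing_inv_mul _ (hQ.isUnit_det_one_sub_smul hγ), add_mulVec,
      one_mulVec, ← mulVec_mulVec, smul_mulVec]
  have hpos : 0 < 1 - |γ| := by linarith
  have hcorr : ‖(1 - γ • Q)⁻¹ *ᵥ (γ • ((Q - P) *ᵥ v))‖ ≤ |γ| * ε / (1 - |γ|) * ‖v‖ := by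
    rw [div_mul_eq_mul_div, le_div_iff₀ hpos, mul_comm]
    calc (1 - |γ|) * ‖(1 - γ • Q)⁻¹ *ᵥ (γ • ((Q - P) *ᵥ v))‖ ≤ ‖γ • ((Q - P) *ᵥ v)‖ :=
          hQ.one_sub_abs_mul_norm_inv_mulVec_le hγ _
      _ ≤ |γ| * ε * ‖v‖ := by
          rw [norm_smul, Real.norm_eq_abs, mul_assoc]
          exact mul_le_mul_of_nonneg_left (hQP v) (abs_nonneg γ)
  rw [hsplit, add_mul, one_mul]
  exact (norm_add_le _ _).trans (add_le_add le_rfl hcorr)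

end RowStochastic

theorem Matrix.sum_abs_apply_le_of_norm_mulVec_le {m n : Type*} [Fintype m] [Fintype n]
    (C : Matrix m n ℝ) {K : ℝ} (hK : 0 ≤ K) (hC : ∀ v, ‖C *ᵥ v‖ ≤ K * ‖v‖) (i : m) :
    ∑ k, |C i k| ≤ K := by
  let _ := Matrix.linftyOpNormedAddCommGroup (m := m) (n := n) (α := ℝ)
  have hnorm : ‖C‖ ≤ K := by
    rw [linfty_opNorm_eq_opNorm]
    exact ContinuousLinearMap.opNorm_le_bound _ hK hC
  calc ∑ k, |C i k| = ((∑ k, ‖C i k‖₊ : NNReal) : ℝ) := by push_cast [coe_nnnorm]; rfl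
    _ ≤ ‖C‖ := by
        rw [linfty_opNorm_def]
        exact NNReal.coe_le_coe.2 (le_sup (f := fun i => ∑ j, ‖C i j‖₊) (mem_univ i))
    _ ≤ K := hnorm

theorem Matrix.PosSemidef.two_mul_abs_apply_le {n : Type*} [Fintype n] [DecidableEq n]
    {B : Matrix n n ℝ} (hB : B.PosSemidef) (k l : n) : 2 * |B k l| ≤ B k k + B l l := by
  have hsymm : B l k = B k l := by simpa using hB.isHermitian.apply k l
  have hquad : ∀ s : ℝ, 0 ≤ B k k + 2 * s * B k l + s ^ 2 * B l l := by
    intro s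
    have := hB.dotProduct_mulVec_nonneg (Pi.single k 1 + Pi.single l s)
    simp [mulVec_add, dotProduct_add, add_dotProduct, mulVec_single, hsymm] at this
    linarith
  cases abs_cases (B k l) <;> nlinarith [hquad 1, hquad (-1)]

theorem abs_apply_le_diagNorm {D : ℕ} (A : Matrix (Fin D) (Fin D) ℝ) (i : Fin D) :
    |A i i| ≤ diagNorm A :=
  le_ciSup (f := fun i => |A i i|) (Set.finite_range _).bddAbove i

theorem diagNorm_nonneg {D : ℕ} (A : Matrix (Fin D) (Fin D) ℝ) : 0 ≤ diagNorm A :=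
  Real.iSup_nonneg fun _ => abs_nonneg _

theorem Matrix.PosSemidef.abs_apply_le_diagNorm {D : ℕ} {B : Matrix (Fin D) (Fin D) ℝ}
    (hB : B.PosSemidef) (k l : Fin D) : |B k l| ≤ diagNorm B := by
  have := hB.two_mul_abs_apply_le k l
  have := (le_abs_self _).trans (_root_.abs_apply_le_diagNorm B k)
  have := (le_abs_self _).trans (_root_.abs_apply_le_diagNorm B l)
  linarith

theorem Matrix.abs_mul_mul_transpose_apply_le {m n : Type*} [Fintype n]
    (X Y : Matrix m n ℝ) {B : Matrix n n ℝ} {N : ℝ} (hB : ∀ k l, |B k l| ≤ N) (i j : m) :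
    |(X * B * Yᵀ) i j| ≤ (∑ k, |X i k|) * (∑ l, |Y j l|) * N := by
  have hexp : (X * B * Yᵀ) i j = ∑ k, ∑ l, X i k * B k l * Y j l := by
    simp only [mul_apply, transpose_apply, sum_mul]
    exact sum_comm
  calc |(X * B * Yᵀ) i j| ≤ ∑ k, ∑ l, |X i k| * |Y j l| * N := by
        rw [hexp]
        refine (abs_sum_le_sum_abs _ _).trans (sum_le_sum fun k _ => ?_)
        refine (abs_sum_le_sum_abs _ _).trans (sum_le_sum fun l _ => ?_)
        rw [abs_mul, abs_mul, mul_right_comm]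
        exact mul_le_mul_of_nonneg_left (hB k l) (by positivity)
    _ = (∑ k, |X i k|) * (∑ l, |Y j l|) * N := by rw [sum_mul_sum, sum_mul]; simp only [sum_mul]

theorem Matrix.mul_mul_transpose_eq_of_isUnit_det {n R : Type*} [Fintype n] [DecidableEq n]
    [CommRing R] {A : Matrix n n R} (hA : IsUnit A.det) (X Y M : Matrix n n R) :
    X * M * Yᵀ = (X * A) * (A⁻¹ * M * A⁻¹ᵀ) * (Y * A)ᵀ := by
  have hmul_inv : A * A⁻¹ = 1 := mul_nonsing_inv _ hA
  have hinv_transpose : A⁻¹ᵀ * Aᵀ = 1 := by rw [← transpose_mul, hmul_inv, transpose_one]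
  calc X * M * Yᵀ = X * (A * A⁻¹) * M * (A⁻¹ᵀ * Aᵀ) * Yᵀ := by
        rw [hmul_inv, hinv_transpose, Matrix.mul_one, Matrix.mul_one]
    _ = (X * A) * (A⁻¹ * M * A⁻¹ᵀ) * (Y * A)ᵀ := by simp only [transpose_mul, Matrix.mul_assoc]

/-- **Lemma (Statement 3).** If `P̂₁, P̂₂` are row-stochastic matrices with
`‖(P̂ᵢ - P)v‖_∞ ≤ ((1-γ)/√2)‖v‖_∞` for all `v` and `i = 1,2`, then for every PSD matrix `M`,
`‖(I - γP̂₁)⁻¹ M (I - γP̂₂)⁻ᵀ‖_diag ≤ 3 ‖(I - γP)⁻¹ M (I - γP)⁻ᵀ‖_diag`. -/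
theorem perturbed_diag_norm_bound
    {D : ℕ} (γ : ℝ) (hγ : γ ∈ Set.Ioo (0 : ℝ) 1)
    (P P1 P2 : Matrix (Fin D) (Fin D) ℝ)
    (hP : RowStochastic P) (hP1 : RowStochastic P1) (hP2 : RowStochastic P2)
    (h1 : ∀ v : Fin D → ℝ, ‖(P1 - P).mulVec v‖ ≤ (1 - γ) / Real.sqrt 2 * ‖v‖)
    (h2 : ∀ v : Fin D → ℝ, ‖(P2 - P).mulVec v‖ ≤ (1 - γ) / Real.sqrt 2 * ‖v‖)
    (M : Matrix (Fin D) (Fin D) ℝ) (hM : M.PosSemidef) :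
    diagNorm ((1 - γ • P1)⁻¹ * M * ((1 - γ • P2)⁻¹)ᵀ) ≤
      3 * diagNorm ((1 - γ • P)⁻¹ * M * ((1 - γ • P)⁻¹)ᵀ) := by
  obtain ⟨hγ0, hγ1⟩ := hγ
  have hγabs : |γ| < 1 := abs_lt.2 ⟨by linarith, hγ1⟩
  set κ := 1 + γ / Real.sqrt 2
  have hκ : κ ^ 2 ≤ 3 := by
    have : (γ / Real.sqrt 2) ^ 2 ≤ 1 / 2 := by
      rw [div_pow, Real.sq_sqrt zero_le_two]; gcongr; nlinarith
    nlinarith [div_nonneg hγ0.le (Real.sqrt_nonneg 2)]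
  have hrows : ∀ Q, RowStochastic Q → (∀ v, ‖(Q - P) *ᵥ v‖ ≤ (1 - γ) / Real.sqrt 2 * ‖v‖) →
      ∀ i, ∑ k, |((1 - γ • Q)⁻¹ * (1 - γ • P)) i k| ≤ κ := by
    intro Q hQ hQP
    refine sum_abs_apply_le_of_norm_mulVec_le _ (by positivity) fun v => ?_
    convert hQ.norm_inv_mul_mulVec_le hγabs hQP v using 3
    rw [abs_of_pos hγ0]
    field_simp [(by linarith : 1 - γ ≠ 0)]
  have hB := hM.mul_mul_conjTranspose_same (1 - γ • P)⁻¹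
  rw [conjTranspose_eq_transpose_of_trivial] at hB
  rw [mul_mul_transpose_eq_of_isUnit_det (hP.isUnit_det_one_sub_smul hγabs)]
  refine Real.iSup_le (fun i => ?_) (mul_nonneg zero_le_three (diagNorm_nonneg _))
  calc _ ≤ _ := abs_mul_mul_transpose_apply_le _ _ hB.abs_apply_le_diagNorm i i
    _ ≤ κ * κ * diagNorm _ := by
        refine mul_le_mul_of_nonneg_right ?_ (diagNorm_nonneg _)
        exact mul_le_mul (hrows P1 hP1 h1 i) (hrows P2 hP2 h2 i)
          (sum_nonneg fun _ _ => abs_nonneg _) (by positivity)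
    _ ≤ 3 * diagNorm _ := by
        rw [← sq]; exact mul_le_mul_of_nonneg_right hκ (diagNorm_nonneg _)

end
end

section
/- Fix δ ∈ (0,1) and let σ̂_N(·) be the diagonal covariance estimate built from N ≥ 2 i.i.d. generative samples. With probability at least 1 − δ, simultaneously for every Q ∈ ℝ^{X×U}: ||σ̂_N(Q)||_diag^{1/2} ≤ √2·||Σ*(Q*)||_diag^{1/2} + b(Q*)·√(16·log(D/δ)/(N−1)) + √8·||Q − Q*||_∞. -/
open MeasureTheory ProbabilityTheory Finset

noncomputable section

variable {X U : Type*}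

/-- A collection of transition kernels: `P u x ·` is a probability distribution over states. -/
def IsKernel [Fintype X] (P : U → X → X → ℝ) : Prop :=
  (∀ u x x', 0 ≤ P u x x') ∧ (∀ u x, ∑ x', P u x x' = 1)

/-- The Bellman optimality operator:
`T(Q)(x,u) = r(x,u) + γ Σ_{x'} P_u(x'|x) max_{u'} Q(x',u')`. -/
def bellOpt [Fintype X] [Fintype U] (γ : ℝ) (P : U → X → X → ℝ) (r : X → U → ℝ)
    (Q : X → U → ℝ) : X → U → ℝ :=
  fun x u => r x u + γ * ∑ x', P u x x' * (⨆ u', Q x' u')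

/-- The empirical Bellman optimality operator built from a single sample `(R, Z)`. -/
def hatOp [Fintype X] [Fintype U] (γ : ℝ) (R : X → U → ℝ) (Z : U → X → X → ℝ)
    (Q : X → U → ℝ) : X → U → ℝ :=
  fun x u => R x u + γ * ∑ x', Z u x x' * (⨆ u', Q x' u')

/-- `‖A‖_diag`: the maximum absolute diagonal entry of a square matrix. -/
def diagNormI {ι : Type*} (A : Matrix ι ι ℝ) : ℝ := ⨆ i, |A i i|

/-- Covariance matrix of a random vector `W`. -/
def covMatrixI {Ω : Type*} {ι : Type*} [MeasurableSpace Ω] (μ : Measure Ω)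
    (W : Ω → ι → ℝ) : Matrix ι ι ℝ :=
  Matrix.of fun i j =>
    ∫ ω, (W ω i - ∫ ω', W ω' i ∂μ) * (W ω j - ∫ ω', W ω' j ∂μ) ∂μ

/-- `Σ*(Q) = Cov(T̂(Q))`: covariance of the single-sample empirical Bellman optimality
operator applied to `Q`, for the sample `(R, Z)`. -/
def SigmaStarQ {Ω : Type*} [MeasurableSpace Ω] [Fintype X] [Fintype U] (μ : Measure Ω)
    (γ : ℝ) (R : Ω → X → U → ℝ) (Z : Ω → U → X → X → ℝ) (Q : X → U → ℝ) :
    Matrix (X × U) (X × U) ℝ :=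
  covMatrixI μ (fun ω p => hatOp γ (R ω) (Z ω) Q p.1 p.2)

/-- The `(x,u)` diagonal entry of the diagonal covariance estimate `σ̂_N(Q)` built from the
first `N` empirical Bellman optimality operators. -/
def sigHat [Fintype X] [Fintype U] (γ : ℝ) (N : ℕ) (R : ℕ → X → U → ℝ)
    (Z : ℕ → U → X → X → ℝ) (Q : X → U → ℝ) (p : X × U) : ℝ :=
  1 / ((N : ℝ) * ((N : ℝ) - 1)) *
    ∑ i ∈ Finset.range N, ∑ j ∈ Finset.range N,
      if i < j then
        (hatOp γ (R i) (Z i) Q p.1 p.2 - hatOp γ (R j) (Z j) Q p.1 p.2) ^ 2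
      else 0

/-- `‖σ̂_N(Q)‖_diag`. -/
def sigHatNorm [Fintype X] [Fintype U] (γ : ℝ) (N : ℕ) (R : ℕ → X → U → ℝ)
    (Z : ℕ → U → X → X → ℝ) (Q : X → U → ℝ) : ℝ :=
  ⨆ p : X × U, |sigHat γ N R Z Q p|

/-- `b(Q) = σ_r + γ‖Q‖_∞`. -/
def bFunQ [Fintype X] [Fintype U] (γ σr : ℝ) (Q : X → U → ℝ) : ℝ := σr + γ * ‖Q‖

/-- A generative sample `(R, Z)` for the MDP `(r, P, γ)` with reward noise scale `σr`. -/
structure IsGenSampleQ {Ω : Type*} [MeasurableSpace Ω] [Fintype X] (μ : Measure Ω)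
    (P : U → X → X → ℝ) (r : X → U → ℝ) (σr : ℝ)
    (R : Ω → X → U → ℝ) (Z : Ω → U → X → X → ℝ) : Prop where
  measurable_R : Measurable R
  measurable_Z : Measurable Z
  zero_one : ∀ᵐ ω ∂μ, ∀ u x x', Z ω u x x' = 0 ∨ Z ω u x x' = 1
  row_sum : ∀ᵐ ω ∂μ, ∀ u x, ∑ x', Z ω u x x' = 1
  row_law : ∀ u x x', μ {ω | Z ω u x x' = 1} = ENNReal.ofReal (P u x x')
  pairs_indep : iIndepFun
    (fun (p : X × U) ω => (R ω p.1 p.2, fun x' => Z ω p.2 p.1 x')) μ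
  indep_RZ : ∀ x u, IndepFun (fun ω => R ω x u) (fun ω x' => Z ω u x x') μ
  mean_R : ∀ x u, ∫ ω, R ω x u ∂μ = r x u
  bound_R : ∀ᵐ ω ∂μ, ∀ x u, |R ω x u - r x u| ≤ σr

/-- An i.i.d. family of generative samples for the MDP, indexed by `ι`. -/
structure IsIIDGenSamplesQ {Ω ι : Type*} [MeasurableSpace Ω] [Fintype X] (μ : Measure Ω)
    (P : U → X → X → ℝ) (r : X → U → ℝ) (σr : ℝ)
    (R : ι → Ω → X → U → ℝ) (Z : ι → Ω → U → X → X → ℝ) : Prop where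
  gen : ∀ i, IsGenSampleQ μ P r σr (R i) (Z i)
  indep : iIndepFun (fun i ω => (R i ω, Z i ω)) μ
  ident : ∀ i j, IdentDistrib (fun ω => (R i ω, Z i ω)) (fun ω => (R j ω, Z j ω)) μ μ

/-- The `A_opt` condition: a `(φf, φs)`-instance-dependent algorithm for estimating `Q*`. -/
def AOptCond {Ω : Type*} [MeasurableSpace Ω] [Fintype X] [Fintype U] (μ : Measure Ω)
    (γ : ℝ) (P : U → X → X → ℝ) (r : X → U → ℝ) (σr : ℝ) (Qstar : X → U → ℝ)
    (φf φs : ℝ → ℝ)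
    (A : (N : ℕ) → (Fin N → (X → U → ℝ) × (U → X → X → ℝ)) → (X → U → ℝ)) : Prop :=
  ∀ δ : ℝ, 0 < δ → δ < 1 → ∀ N : ℕ, 0 < N →
    ∀ (R : ℕ → Ω → X → U → ℝ) (Z : ℕ → Ω → U → X → X → ℝ),
      IsIIDGenSamplesQ μ P r σr R Z →
      ENNReal.ofReal (1 - δ) ≤ μ {ω |
        ‖A N (fun j => (R (j : ℕ) ω, Z (j : ℕ) ω)) - Qstar‖ ≤
          φf δ / Real.sqrt N *
              Real.sqrt (diagNormI (SigmaStarQ μ γ (R 0) (Z 0) Qstar)) / (1 - γ) +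
            φs δ / N}

/-!
Fix a state–action pair `p`. The squared deviations `Wᵢ = (T̂ᵢ(Q*)(p) - Q*(p))²` are i.i.d.,
lie in `[0, (2 b(Q*))²]`, and have mean `Σ*(Q*)_{pp}` because `T̂(Q*)` is an unbiased estimate of
`T(Q*) = Q*`. A Bennett-type Chernoff bound (Markov's inequality in the corner case `N = 2`,
`L ≤ 5/4`) gives `∑ᵢ Wᵢ ≤ 2 (N - 1) Σ*(Q*)_{pp} + 16 b(Q*)² L` outside an event of probability
`e^{-L} = δ / D`, and a union bound over the `D` pairs makes this hold for all `p` at once.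
Since `σ̂_N(Q*)_{pp} ≤ ∑ᵢ Wᵢ / (N - 1)` by Lagrange's identity, this gives the first two terms.
Finally `√σ̂_N(·)_{pp}` is a Euclidean seminorm of the vector `(T̂ᵢ(·)(p))ᵢ` and every `T̂ᵢ` is
`γ`-Lipschitz in the sup norm, so replacing `Q*` by any `Q` costs at most `√2 γ ‖Q - Q*‖`.
-/

open Real

lemma exp_one_quarter_lt : exp (1 / 4) < 4 / 3 := by
  refine lt_of_pow_lt_pow_left₀ 4 (by norm_num) ?_
  rw [← exp_nat_mul]
  norm_num
  linarith [exp_one_lt_d9]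

lemma exp_five_quarters_lt : exp (5 / 4) < 7 / 2 := by
  refine lt_of_pow_lt_pow_left₀ 4 (by norm_num) ?_
  have h5 : exp 1 ^ 5 < 2.7182818286 ^ 5 := by gcongr; exact exp_one_lt_d9
  rw [← exp_nat_mul, show ((4 : ℕ) : ℝ) * (5 / 4) = (5 : ℕ) by norm_num, ← exp_one_pow]
  norm_num at h5 ⊢
  linarith

lemma mul_sub_exp_le_mul_log {y : ℝ} (hy : 0 < y) (a : ℝ) :
    a * y - exp (a - 1) ≤ y * log y := by
  have h := log_le_sub_one_of_pos (div_pos (exp_pos (a - 1)) hy)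
  rw [log_div (exp_pos _).ne' hy.ne', log_exp, le_sub_iff_add_le, le_div_iff₀ hy] at h
  nlinarith

lemma exp_le_one_add_two_mul {L : ℝ} (h0 : 0 ≤ L) (h1 : L ≤ 5 / 4) : exp L ≤ 1 + 2 * L := by
  have h := convexOn_exp.2 (Set.mem_univ 0) (Set.mem_univ (5 / 4))
    (by linarith : 0 ≤ 1 - 4 / 5 * L) (by linarith : 0 ≤ 4 / 5 * L) (by ring)
  simp only [smul_eq_mul, mul_zero, zero_add, exp_zero, mul_one] at h
  rw [show 4 / 5 * L * (5 / 4) = L by ring] at h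
  nlinarith [exp_five_quarters_lt]

lemma exp_mul_le_one_add {C w : ℝ} (hC : 0 < C) (hw : w ∈ Set.Icc 0 C) (t : ℝ) :
    exp (t * w) ≤ 1 + w / C * (exp (t * C) - 1) := by
  have hθ : w / C ≤ 1 := (div_le_one hC).2 hw.2
  have h := convexOn_exp.2 (Set.mem_univ 0) (Set.mem_univ (t * C))
    (sub_nonneg.2 hθ) (div_nonneg hw.1 hC.le) (by ring)
  simp only [smul_eq_mul, mul_zero, zero_add, exp_zero, mul_one] at h
  rw [show w / C * (t * C) = t * w by field_simp] at h
  linarith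

lemma sqrt_add_le_sqrt_add_sqrt {x y : ℝ} (hx : 0 ≤ x) (hy : 0 ≤ y) : √(x + y) ≤ √x + √y := by
  rw [sqrt_le_left (by positivity)]
  nlinarith [sq_sqrt hx, sq_sqrt hy, sqrt_nonneg x, sqrt_nonneg y]

lemma sqrt_sum_add_sq_le {ι : Type*} (s : Finset ι) (f g : ι → ℝ) :
    √(∑ i ∈ s, (f i + g i) ^ 2) ≤ √(∑ i ∈ s, f i ^ 2) + √(∑ i ∈ s, g i ^ 2) := by
  simpa [sqrt_eq_rpow, rpow_two, sq_abs] using Lp_add_le s f g (p := 2) one_le_two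

lemma bennett_exponent_le_of_three_le {n v C L : ℝ} (hn : 3 ≤ n) (hv : 0 < v) (hC : 0 < C)
    (hL : 0 < L) :
    (2 * (n - 1) * v + 4 * C * L - n * v) / C -
      (2 * (n - 1) * v + 4 * C * L) / C * log ((2 * (n - 1) * v + 4 * C * L) / (n * v)) ≤ -L := by
  set s := 2 * (n - 1) * v + 4 * C * L
  set y := s / (n * v)
  have hnv : 0 < n * v := mul_pos (by linarith) hv
  have hy : 0 < y := div_pos (by simp only [s]; nlinarith) hnv
  -- `y log y ≥ 5/4 y - e^{1/4}` with `e^{1/4} < 4/3`; what is left over is `≥ 0` iff `n ≥ 3`.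
  have htangent := mul_sub_exp_le_mul_log hy (5 / 4)
  norm_num at htangent
  have hscale : s / C * log y = n * v / C * (y * log y) := by
    simp only [y]; field_simp
  have hlower : n * v / C * (5 / 4 * y - 4 / 3) ≤ n * v / C * (y * log y) :=
    mul_le_mul_of_nonneg_left (by linarith [exp_one_quarter_lt]) (div_pos hnv hC).le
  have hlower' : n * v / C * (5 / 4 * y - 4 / 3) = (5 / 4 * s - 4 / 3 * (n * v)) / C := by
    simp only [y]; field_simp
  have hfinal : (s - n * v) / C - (5 / 4 * s - 4 / 3 * (n * v)) / C ≤ -L := by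
    rw [div_sub_div_same, div_le_iff₀ hC]
    simp only [s]
    nlinarith
  linarith

lemma bennett_exponent_le_of_five_quarters_lt {v C L : ℝ} (hv : 0 < v) (hvC : v ≤ C)
    (hL : 5 / 4 < L) :
    (2 * v + 4 * C * L - 2 * v) / C - (2 * v + 4 * C * L) / C * log ((2 * v + 4 * C * L) / (2 * v))
      ≤ -L := by
  have hC : 0 < C := hv.trans_le hvC
  have hlog : 5 / 4 ≤ log ((2 * v + 4 * C * L) / (2 * v)) := by
    rw [le_log_iff_exp_le (by positivity), le_div_iff₀ (by positivity)]
    nlinarith [exp_five_quarters_lt]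
  have hA : 4 * L ≤ (2 * v + 4 * C * L) / C := by
    rw [le_div_iff₀ hC]; linarith
  have hB : (2 * v + 4 * C * L - 2 * v) / C = 4 * L := by field_simp; ring
  nlinarith

lemma two_mul_le_exp_neg_mul {v C L : ℝ} (hv : 0 ≤ v) (hvC : v ≤ C) (hL : 0 ≤ L)
    (hL' : L ≤ 5 / 4) :
    2 * v ≤ exp (-L) * (2 * v + 4 * C * L) := by
  have h : 2 * v * exp L ≤ 2 * v + 4 * C * L := by
    nlinarith [exp_le_one_add_two_mul hL hL', mul_le_mul_of_nonneg_right hvC hL]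
  calc 2 * v = exp (-L) * (2 * v * exp L) := by
        rw [mul_left_comm, ← exp_add, neg_add_cancel, exp_zero, mul_one]
    _ ≤ exp (-L) * (2 * v + 4 * C * L) := by gcongr

def pairSqSum (N : ℕ) (a : ℕ → ℝ) : ℝ :=
  ∑ i ∈ range N, ∑ j ∈ range N, if i < j then (a i - a j) ^ 2 else 0

lemma pairSqSum_nonneg (N : ℕ) (a : ℕ → ℝ) : 0 ≤ pairSqSum N a :=
  Finset.sum_nonneg fun i _ => Finset.sum_nonneg fun j _ => by split_ifs <;> positivity

lemma pairSqSum_eq (N : ℕ) (a : ℕ → ℝ) :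
    pairSqSum N a = N * ∑ i ∈ range N, a i ^ 2 - (∑ i ∈ range N, a i) ^ 2 := by
  induction N with
  | zero => simp [pairSqSum]
  | succ N ih =>
    have hstep : pairSqSum (N + 1) a = pairSqSum N a + ∑ i ∈ range N, (a i - a N) ^ 2 := by
      simp only [pairSqSum, Finset.sum_range_succ, lt_irrefl, if_false, add_zero]
      have hzero : ∑ j ∈ range N, (if N < j then (a N - a j) ^ 2 else 0) = 0 :=
        Finset.sum_eq_zero fun j hj => if_neg (by simp at hj; omega)
      have hlast : ∑ i ∈ range N, (if i < N then (a i - a N) ^ 2 else 0) =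
          ∑ i ∈ range N, (a i - a N) ^ 2 :=
        Finset.sum_congr rfl fun i hi => if_pos (Finset.mem_range.1 hi)
      rw [Finset.sum_add_distrib, hzero, hlast, add_zero]
    rw [hstep, ih]
    simp only [Finset.sum_range_succ, sub_sq, Finset.sum_add_distrib, Finset.sum_sub_distrib,
      ← Finset.sum_mul, ← Finset.mul_sum, Finset.sum_const, Finset.card_range, nsmul_eq_mul]
    push_cast
    ring

lemma pairSqSum_le (N : ℕ) (a : ℕ → ℝ) (m : ℝ) :
    pairSqSum N a ≤ N * ∑ i ∈ range N, (a i - m) ^ 2 := by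
  have hshift : pairSqSum N a = pairSqSum N fun i => a i - m := by
    simp only [pairSqSum, sub_sub_sub_cancel_right]
  rw [hshift, pairSqSum_eq]
  linarith [sq_nonneg (∑ i ∈ range N, (a i - m))]

lemma sqrt_pairSqSum_add_le (N : ℕ) (a b : ℕ → ℝ) :
    √(pairSqSum N (a + b)) ≤ √(pairSqSum N a) + √(pairSqSum N b) := by
  have hpairs : ∀ c : ℕ → ℝ, pairSqSum N c =
      ∑ q ∈ (range N ×ˢ range N).filter (fun q : ℕ × ℕ => q.1 < q.2), (c q.1 - c q.2) ^ 2 :=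
    fun c => by rw [Finset.sum_filter, Finset.sum_product, pairSqSum]
  simpa only [hpairs, Pi.add_apply, add_sub_add_comm] using
    sqrt_sum_add_sq_le _ (fun q : ℕ × ℕ => a q.1 - a q.2) (fun q : ℕ × ℕ => b q.1 - b q.2)

section Concentration

variable {Ω : Type*} [MeasurableSpace Ω] {μ : Measure Ω} [IsProbabilityMeasure μ]

lemma mgf_le_one_add_of_mem_Icc {W : Ω → ℝ} (hW : AEMeasurable W μ) {C : ℝ} (hC : 0 < C)
    (hb : ∀ᵐ ω ∂μ, W ω ∈ Set.Icc 0 C) (t : ℝ) :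
    mgf W μ t ≤ 1 + μ[W] / C * (exp (t * C) - 1) := by
  have hint : Integrable W μ := .of_mem_Icc 0 C hW hb
  have hchord : Integrable (fun ω => 1 + W ω / C * (exp (t * C) - 1)) μ :=
    (integrable_const 1).add ((hint.div_const C).mul_const _)
  calc mgf W μ t = ∫ ω, exp (t * W ω) ∂μ := rfl
    _ ≤ ∫ ω, (1 + W ω / C * (exp (t * C) - 1)) ∂μ :=
        integral_mono_ae (integrable_exp_mul_of_mem_Icc hW hb) hchord
          (by filter_upwards [hb] with ω h using exp_mul_le_one_add hC h t)
    _ = 1 + μ[W] / C * (exp (t * C) - 1) := by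
        rw [integral_add (integrable_const 1) ((hint.div_const C).mul_const _),
          integral_mul_const, integral_div]
        simp

variable {W : ℕ → Ω → ℝ} {C v : ℝ}

lemma measureReal_le_sum_le_exp_mul_pow (hmeas : ∀ i, Measurable (W i))
    (hindep : iIndepFun W μ) (hC : 0 < C) (hb : ∀ i, ∀ᵐ ω ∂μ, W i ω ∈ Set.Icc 0 C)
    (hmean : ∀ i, μ[W i] = v) (N : ℕ) (s : ℝ) {t : ℝ} (ht : 0 ≤ t) :
    μ.real {ω | s ≤ ∑ i ∈ range N, W i ω} ≤
      exp (-t * s) * (1 + v / C * (exp (t * C) - 1)) ^ N := by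
  have hsum_le : ∀ᵐ ω ∂μ, (∑ i ∈ range N, W i) ω ≤ N * C := by
    filter_upwards [ae_all_iff.2 hb] with ω h
    simpa [Finset.sum_apply] using
      Finset.sum_le_card_nsmul (range N) (fun i => W i ω) C fun i _ => (h i).2
  have hchernoff := measure_ge_le_exp_mul_mgf s ht
    (integrable_exp_mul_of_le t _ ht (by fun_prop) hsum_le)
  simp only [Finset.sum_apply] at hchernoff
  refine hchernoff.trans (mul_le_mul_of_nonneg_left ?_ (exp_pos _).le)
  calc mgf (∑ i ∈ range N, W i) μ t = ∏ i ∈ range N, mgf (W i) μ t := hindep.mgf_sum hmeas _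
    _ ≤ ∏ _i ∈ range N, (1 + v / C * (exp (t * C) - 1)) :=
        Finset.prod_le_prod (fun i _ => mgf_nonneg) fun i _ =>
          hmean i ▸ mgf_le_one_add_of_mem_Icc (hmeas i).aemeasurable hC (hb i) t
    _ = (1 + v / C * (exp (t * C) - 1)) ^ N := by simp

lemma measureReal_le_sum_le_bennett (hmeas : ∀ i, Measurable (W i)) (hindep : iIndepFun W μ)
    (hC : 0 < C) (hb : ∀ i, ∀ᵐ ω ∂μ, W i ω ∈ Set.Icc 0 C) (hmean : ∀ i, μ[W i] = v)
    (hv : 0 < v) {N : ℕ} (hN : 0 < N) {s : ℝ} (hs : N * v ≤ s) :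
    μ.real {ω | s ≤ ∑ i ∈ range N, W i ω} ≤ exp ((s - N * v) / C - s / C * log (s / (N * v))) := by
  have hNv : 0 < (N : ℝ) * v := mul_pos (by exact_mod_cast hN) hv
  set t := log (s / (N * v)) / C
  have ht : 0 ≤ t := div_nonneg (log_nonneg ((one_le_div hNv).2 hs)) hC.le
  have htC : exp (t * C) = s / (N * v) := by
    rw [div_mul_cancel₀ _ hC.ne', exp_log (div_pos (hNv.trans_le hs) hNv)]
  refine (measureReal_le_sum_le_exp_mul_pow hmeas hindep hC hb hmean N s ht).trans ?_
  have hbase : 1 + v / C * (exp (t * C) - 1) = (s - N * v) / (N * C) + 1 := by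
    rw [htC]; field_simp; ring
  calc exp (-t * s) * (1 + v / C * (exp (t * C) - 1)) ^ N
      ≤ exp (-t * s) * exp ((s - N * v) / (N * C)) ^ N := by
        rw [hbase]
        gcongr
        exact add_one_le_exp _
    _ = exp ((s - N * v) / C - s / C * log (s / (N * v))) := by
        rw [← exp_nat_mul, ← exp_add]
        congr 1
        simp only [t]
        field_simp
        ring

lemma measureReal_le_sum_le_div (hmeas : ∀ i, Measurable (W i))
    (hb : ∀ i, ∀ᵐ ω ∂μ, W i ω ∈ Set.Icc 0 C) (hmean : ∀ i, μ[W i] = v) (N : ℕ) {s : ℝ}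
    (hs : 0 < s) :
    μ.real {ω | s ≤ ∑ i ∈ range N, W i ω} ≤ N * v / s := by
  have hint : ∀ i, Integrable (W i) μ := fun i => .of_mem_Icc 0 C (hmeas i).aemeasurable (hb i)
  have hsum_nonneg : 0 ≤ᵐ[μ] fun ω => ∑ i ∈ range N, W i ω :=
    (ae_all_iff.2 hb).mono fun ω h => Finset.sum_nonneg fun i _ => (h i).1
  have hmarkov := mul_meas_ge_le_integral_of_nonneg hsum_nonneg
    (integrable_finsetSum (range N) fun i _ => hint i) s
  rw [integral_finsetSum _ fun i _ => hint i] at hmarkov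
  simp only [hmean, sum_const, card_range, nsmul_eq_mul] at hmarkov
  rw [le_div_iff₀ hs]
  linarith

lemma measureReal_lt_sum_eq_zero_of_mean_eq_zero (hmeas : ∀ i, Measurable (W i))
    (hb : ∀ i, ∀ᵐ ω ∂μ, W i ω ∈ Set.Icc 0 C) (hmean : ∀ i, μ[W i] = 0) {s : ℝ} (hs : 0 ≤ s)
    (N : ℕ) :
    μ.real {ω | s < ∑ i ∈ range N, W i ω} = 0 := by
  have hzero : ∀ i, W i =ᵐ[μ] 0 := fun i =>
    (integral_eq_zero_iff_of_nonneg_ae ((hb i).mono fun ω h => h.1)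
      (Integrable.of_mem_Icc 0 C (hmeas i).aemeasurable (hb i))).1 (hmean i)
  rw [measureReal_def, measure_eq_zero_iff_ae_notMem.2, ENNReal.toReal_zero]
  filter_upwards [ae_all_iff.2 hzero] with ω h
  simp [h, hs]

lemma measureReal_lt_sum_le_exp_neg (hmeas : ∀ i, Measurable (W i)) (hindep : iIndepFun W μ)
    (hb : ∀ i, ∀ᵐ ω ∂μ, W i ω ∈ Set.Icc 0 C) (hmean : ∀ i, μ[W i] = v) {N : ℕ} (hN : 2 ≤ N)
    {L : ℝ} (hL : 0 < L) :
    μ.real {ω | 2 * (N - 1) * v + 4 * C * L < ∑ i ∈ range N, W i ω} ≤ exp (-L) := by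
  have hint : ∀ i, Integrable (W i) μ := fun i => .of_mem_Icc 0 C (hmeas i).aemeasurable (hb i)
  have hv0 : 0 ≤ v := hmean 0 ▸ integral_nonneg_of_ae ((hb 0).mono fun ω h => h.1)
  have hvC : v ≤ C := by
    rw [← hmean 0]
    simpa using integral_mono_ae (hint 0) (integrable_const C) ((hb 0).mono fun ω h => h.2)
  have hN' : (2 : ℝ) ≤ N := by exact_mod_cast hN
  rcases hv0.eq_or_lt with rfl | hv
  · rw [measureReal_lt_sum_eq_zero_of_mean_eq_zero hmeas hb hmean (by nlinarith) N]
    exact (exp_pos _).le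
  have hC : 0 < C := hv.trans_le hvC
  set s := 2 * ((N : ℝ) - 1) * v + 4 * C * L
  refine (measureReal_mono (Set.ofPred_subset_ofPred.2 fun ω h => h.le)
    (measure_ne_top _ {ω | s ≤ ∑ i ∈ range N, W i ω})).trans ?_
  have hbennett := measureReal_le_sum_le_bennett hmeas hindep hC hb hmean hv (N := N)
    (by omega) (s := s) (by nlinarith)
  -- Bennett's bound suffices unless `N = 2` and `L ≤ 5/4`, where Markov's inequality does.
  rcases (show 3 ≤ N ∨ N = 2 by omega) with hN3 | rfl
  · exact hbennett.trans (exp_le_exp.2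
      (bennett_exponent_le_of_three_le (by exact_mod_cast hN3) hv hC hL))
  have hs : s = 2 * v + 4 * C * L := by simp only [s]; norm_num
  by_cases hL' : L ≤ 5 / 4
  · have hspos : 0 < s := by rw [hs]; positivity
    refine (measureReal_le_sum_le_div hmeas hb hmean 2 hspos).trans ?_
    rw [div_le_iff₀ hspos, hs, Nat.cast_ofNat]
    exact two_mul_le_exp_neg_mul hv0 hvC hL.le hL'
  · refine hbennett.trans (exp_le_exp.2 ?_)
    simp only [hs, Nat.cast_ofNat]
    exact bennett_exponent_le_of_five_quarters_lt hv hvC (not_le.1 hL')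

end Concentration

lemma ofReal_one_sub_le_measure_of_union_bound {Ω ι : Type*} [MeasurableSpace Ω] {μ : Measure Ω}
    [IsProbabilityMeasure μ] [Fintype ι] [Nonempty ι] {δ : ℝ} {A : ι → Set Ω} {G : Set Ω}
    (hA : ∀ i, μ.real (A i) ≤ δ / Fintype.card ι) (hG : (⋃ i, A i)ᶜ ≤ᵐ[μ] G) :
    ENNReal.ofReal (1 - δ) ≤ μ G := by
  have hunion : μ.real (⋃ i, A i) ≤ δ := by
    refine (measureReal_iUnion_fintype_le A).trans ((Finset.sum_le_sum fun i _ => hA i).trans_eq ?_)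
    rw [Finset.sum_const, Finset.card_univ, nsmul_eq_mul]
    field_simp
  have hcompl : 1 - δ ≤ μ.real (⋃ i, A i)ᶜ := by
    have := measureReal_union_le (μ := μ) (⋃ i, A i)ᶜ (⋃ i, A i)
    rw [Set.compl_union_self, probReal_univ] at this
    linarith
  calc ENNReal.ofReal (1 - δ) ≤ μ (⋃ i, A i)ᶜ :=
        (ENNReal.ofReal_le_iff_le_toReal (measure_ne_top _ _)).2 hcompl
    _ ≤ μ G := measure_mono_ae hG

section Bellman

lemma abs_ciSup_sub_ciSup_le [Finite U] [Nonempty U] {f g : U → ℝ} {B : ℝ}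
    (h : ∀ u, |f u - g u| ≤ B) : |(⨆ u, f u) - ⨆ u, g u| ≤ B := by
  have hsup : ∀ f g : U → ℝ, (∀ u, f u - g u ≤ B) → (⨆ u, f u) - ⨆ u, g u ≤ B :=
    fun f g h => sub_le_iff_le_add.2 <| ciSup_le fun u => by
      linarith [h u, le_ciSup (Set.finite_range g).bddAbove u]
  rw [abs_sub_le_iff]
  exact ⟨hsup f g fun u => (abs_le.1 (h u)).2, hsup g f fun u => by linarith [(abs_le.1 (h u)).1]⟩

lemma IsKernel.abs_sum_mul_le [Fintype X] {P : U → X → X → ℝ} (hP : IsKernel P) (u : U) (x : X)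
    {V : X → ℝ} {B : ℝ} (hV : ∀ x', |V x'| ≤ B) : |∑ x', P u x x' * V x'| ≤ B :=
  calc |∑ x', P u x x' * V x'| ≤ ∑ x', P u x x' * B :=
        (Finset.abs_sum_le_sum_abs _ _).trans <| Finset.sum_le_sum fun x' _ => by
          rw [abs_mul, abs_of_nonneg (hP.1 u x x')]
          exact mul_le_mul_of_nonneg_left (hV x') (hP.1 u x x')
    _ = B := by rw [← Finset.sum_mul, hP.2 u x, one_mul]

variable [Fintype X] [Fintype U] [Nonempty U]

lemma abs_ciSup_sub_ciSup_le_norm_sub (Q Q' : X → U → ℝ) (x : X) :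
    |(⨆ u, Q x u) - ⨆ u, Q' x u| ≤ ‖Q - Q'‖ :=
  abs_ciSup_sub_ciSup_le fun u => by
    simpa using (norm_le_pi_norm ((Q - Q') x) u).trans (norm_le_pi_norm (Q - Q') x)

lemma abs_ciSup_le_norm (Q : X → U → ℝ) (x : X) : |⨆ u, Q x u| ≤ ‖Q‖ := by
  simpa using abs_ciSup_sub_ciSup_le_norm_sub Q 0 x

lemma abs_hatOp_sub_hatOp_le {γ : ℝ} (hγ : 0 ≤ γ) (R : X → U → ℝ) {Z : U → X → X → ℝ}
    (hZ : IsKernel Z) (Q Q' : X → U → ℝ) (x : X) (u : U) :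
    |hatOp γ R Z Q x u - hatOp γ R Z Q' x u| ≤ γ * ‖Q - Q'‖ := by
  have hdiff : hatOp γ R Z Q x u - hatOp γ R Z Q' x u =
      γ * ∑ x', Z u x x' * ((⨆ u', Q x' u') - ⨆ u', Q' x' u') := by
    simp only [hatOp, mul_sub, Finset.sum_sub_distrib]
    ring
  rw [hdiff, abs_mul, abs_of_nonneg hγ]
  exact mul_le_mul_of_nonneg_left
    (hZ.abs_sum_mul_le u x fun x' => abs_ciSup_sub_ciSup_le_norm_sub Q Q' x') hγ

lemma abs_hatOp_sub_bellOpt_le {γ : ℝ} (hγ : 0 ≤ γ) {P Z : U → X → X → ℝ} (hP : IsKernel P)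
    (hZ : IsKernel Z) {R r : X → U → ℝ} {σr : ℝ} (hR : ∀ x u, |R x u - r x u| ≤ σr)
    (Q : X → U → ℝ) (x : X) (u : U) :
    |hatOp γ R Z Q x u - bellOpt γ P r Q x u| ≤ σr + 2 * γ * ‖Q‖ := by
  have hdiff : hatOp γ R Z Q x u - bellOpt γ P r Q x u = (R x u - r x u) +
      γ * (∑ x', Z u x x' * (⨆ u', Q x' u') - ∑ x', P u x x' * (⨆ u', Q x' u')) := by
    simp only [hatOp, bellOpt]
    ring
  have hZV := hZ.abs_sum_mul_le u x fun x' => abs_ciSup_le_norm Q x'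
  have hPV := hP.abs_sum_mul_le u x fun x' => abs_ciSup_le_norm Q x'
  rw [hdiff]
  calc _ ≤ |R x u - r x u| + γ * (|∑ x', Z u x x' * (⨆ u', Q x' u')| +
          |∑ x', P u x x' * (⨆ u', Q x' u')|) := by
        refine (abs_add_le _ _).trans (add_le_add le_rfl ?_)
        rw [abs_mul, abs_of_nonneg hγ]
        exact mul_le_mul_of_nonneg_left (abs_sub _ _) hγ
    _ ≤ σr + γ * (‖Q‖ + ‖Q‖) := by gcongr; exact hR x u
    _ = σr + 2 * γ * ‖Q‖ := by ring

end Bellman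

namespace IsGenSampleQ

variable {Ω : Type*} [MeasurableSpace Ω] {μ : Measure Ω} [Fintype X] {P : U → X → X → ℝ}
  {r : X → U → ℝ} {σr : ℝ} {R : Ω → X → U → ℝ} {Z : Ω → U → X → X → ℝ}

lemma ae_isKernel (h : IsGenSampleQ μ P r σr R Z) : ∀ᵐ ω ∂μ, IsKernel (Z ω) := by
  filter_upwards [h.zero_one, h.row_sum] with ω h01 hsum
  exact ⟨fun u x x' => by rcases h01 u x x' with h | h <;> simp [h], hsum⟩

lemma noise_nonneg [NeZero μ] [Nonempty X] [Nonempty U] (h : IsGenSampleQ μ P r σr R Z) :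
    0 ≤ σr := by
  obtain ⟨ω, hω⟩ := h.bound_R.exists
  exact (abs_nonneg _).trans (hω (Classical.arbitrary X) (Classical.arbitrary U))

lemma integral_Z (h : IsGenSampleQ μ P r σr R Z) (hP : IsKernel P) (u : U) (x x' : X) :
    ∫ ω, Z ω u x x' ∂μ = P u x x' := by
  have hZ := h.measurable_Z
  have hmeas : MeasurableSet {ω | Z ω u x x' = 1} :=
    measurableSet_eq_fun (by fun_prop) measurable_const
  have hind : (fun ω => Z ω u x x') =ᵐ[μ] {ω | Z ω u x x' = 1}.indicator 1 := by
    filter_upwards [h.zero_one] with ω h01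
    rcases h01 u x x' with h0 | h1 <;> simp [Set.indicator, *]
  rw [integral_congr_ae hind, integral_indicator_one hmeas, measureReal_def, h.row_law,
    ENNReal.toReal_ofReal (hP.1 u x x')]

variable [IsProbabilityMeasure μ]

lemma integral_hatOp [Fintype U] (h : IsGenSampleQ μ P r σr R Z) (hP : IsKernel P) (γ : ℝ)
    (Q : X → U → ℝ) (x : X) (u : U) :
    ∫ ω, hatOp γ (R ω) (Z ω) Q x u ∂μ = bellOpt γ P r Q x u := by
  have hR := h.measurable_R
  have hZ := h.measurable_Z
  have hRint : Integrable (fun ω => R ω x u) μ :=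
    .of_mem_Icc (r x u - σr) (r x u + σr) (by fun_prop) <| h.bound_R.mono fun ω hω => by
      constructor <;> linarith [abs_le.1 (hω x u)]
  have hZint : ∀ x', Integrable (fun ω => Z ω u x x' * (⨆ u', Q x' u')) μ := fun x' =>
    (Integrable.of_mem_Icc 0 1 (by fun_prop) <| h.zero_one.mono fun ω hω => by
      rcases hω u x x' with h0 | h1 <;> simp [*]).mul_const _
  simp only [hatOp, bellOpt]
  rw [integral_add hRint ((integrable_finsetSum _ fun x' _ => hZint x').const_mul γ),
    integral_const_mul, integral_finsetSum _ fun x' _ => hZint x', h.mean_R]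
  simp only [integral_mul_const, h.integral_Z hP]

lemma sigmaStarQ_apply_self [Fintype U] (h : IsGenSampleQ μ P r σr R Z) (hP : IsKernel P)
    {γ : ℝ} {Q : X → U → ℝ} (hQ : bellOpt γ P r Q = Q) (p : X × U) :
    SigmaStarQ μ γ R Z Q p p = ∫ ω, (hatOp γ (R ω) (Z ω) Q p.1 p.2 - Q p.1 p.2) ^ 2 ∂μ := by
  simp only [SigmaStarQ, covMatrixI, Matrix.of_apply, h.integral_hatOp hP, hQ, sq]

end IsGenSampleQ

lemma abs_le_diagNormI {ι : Type*} [Finite ι] (A : Matrix ι ι ℝ) (i : ι) :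
    |A i i| ≤ diagNormI A :=
  le_ciSup (f := fun i => |A i i|) (Set.finite_range _).bddAbove i

section SampleVariance

variable [Fintype X] [Fintype U] {γ : ℝ} {N : ℕ} {R : ℕ → X → U → ℝ} {Z : ℕ → U → X → X → ℝ}

lemma sigHat_eq (Q : X → U → ℝ) (p : X × U) :
    sigHat γ N R Z Q p =
      pairSqSum N (fun i => hatOp γ (R i) (Z i) Q p.1 p.2) / (N * (N - 1)) := by
  rw [sigHat, pairSqSum, one_div_mul_eq_div]

lemma sigHat_nonneg (Q : X → U → ℝ) (p : X × U) : 0 ≤ sigHat γ N R Z Q p := by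
  rw [sigHat_eq]
  refine div_nonneg (pairSqSum_nonneg _ _) ?_
  rcases N.eq_zero_or_pos with rfl | hN
  · simp
  · exact mul_nonneg (Nat.cast_nonneg N) (sub_nonneg.2 (by exact_mod_cast hN))

lemma sigHat_le_sum_sq_div (hN : 2 ≤ N) (Q : X → U → ℝ) (p : X × U) (m : ℝ) :
    sigHat γ N R Z Q p ≤ (∑ i ∈ range N, (hatOp γ (R i) (Z i) Q p.1 p.2 - m) ^ 2) / (N - 1) := by
  have hN' : (2 : ℝ) ≤ N := by exact_mod_cast hN
  rw [sigHat_eq, div_le_div_iff₀ (by nlinarith) (by linarith)]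
  have := pairSqSum_le N (fun i => hatOp γ (R i) (Z i) Q p.1 p.2) m
  nlinarith

lemma sqrt_sigHat_le_add [Nonempty U] (hγ : 0 ≤ γ) (hZ : ∀ i, IsKernel (Z i)) (hN : 2 ≤ N)
    (Q Q' : X → U → ℝ) (p : X × U) :
    √(sigHat γ N R Z Q p) ≤ √(sigHat γ N R Z Q' p) + √2 * (γ * ‖Q - Q'‖) := by
  set ε := γ * ‖Q - Q'‖
  set a' : ℕ → ℝ := fun i => hatOp γ (R i) (Z i) Q' p.1 p.2
  set d : ℕ → ℝ := fun i => hatOp γ (R i) (Z i) Q p.1 p.2 - a' i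
  have hN' : (2 : ℝ) ≤ N := by exact_mod_cast hN
  have hw : 0 < (N : ℝ) * (N - 1) := by nlinarith
  have hdi : ∀ i, d i ^ 2 ≤ ε ^ 2 := fun i => by
    rw [← sq_abs]
    exact pow_le_pow_left₀ (abs_nonneg _) (abs_hatOp_sub_hatOp_le hγ (R i) (hZ i) Q Q' p.1 p.2) 2
  have hd : pairSqSum N d ≤ N * (N * ε ^ 2) := by
    refine (pairSqSum_le N d 0).trans (mul_le_mul_of_nonneg_left ?_ (Nat.cast_nonneg N))
    simpa using Finset.sum_le_card_nsmul (range N) (fun i => d i ^ 2) (ε ^ 2) fun i _ => hdi i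
  have hdw : pairSqSum N d / (N * (N - 1)) ≤ 2 * ε ^ 2 := by
    rw [div_le_iff₀ hw]
    nlinarith [mul_nonneg (mul_nonneg (sub_nonneg.2 hN') (Nat.cast_nonneg N)) (sq_nonneg ε)]
  have hsplit : (fun i => hatOp γ (R i) (Z i) Q p.1 p.2) = a' + d := by
    ext i; simp [a', d]
  have hε : 0 ≤ ε := mul_nonneg hγ (norm_nonneg _)
  rw [sigHat_eq, sigHat_eq, hsplit]
  set w := (N : ℝ) * (N - 1)
  calc √(pairSqSum N (a' + d) / w) = √(pairSqSum N (a' + d)) / √w := sqrt_div' _ hw.le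
    _ ≤ (√(pairSqSum N a') + √(pairSqSum N d)) / √w := by
        gcongr; exact sqrt_pairSqSum_add_le N a' d
    _ = √(pairSqSum N a' / w) + √(pairSqSum N d / w) := by
        rw [add_div, sqrt_div' _ hw.le, sqrt_div' _ hw.le]
    _ ≤ √(pairSqSum N a' / w) + √(2 * ε ^ 2) := by gcongr
    _ = √(pairSqSum N a' / w) + √2 * ε := by rw [sqrt_mul zero_le_two, sqrt_sq hε]

lemma sqrt_sigHatNorm_le [Nonempty X] [Nonempty U] {Q : X → U → ℝ} {B : ℝ}
    (h : ∀ p, √(sigHat γ N R Z Q p) ≤ B) : √(sigHatNorm γ N R Z Q) ≤ B := by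
  have hB : 0 ≤ B := (sqrt_nonneg _).trans (h (Classical.arbitrary _))
  rw [sqrt_le_left hB]
  refine ciSup_le fun p => ?_
  rw [abs_of_nonneg (sigHat_nonneg Q p)]
  exact (sqrt_le_left hB).1 (h p)

lemma sqrt_sigHat_le_of_sum_sq_le (hN : 2 ≤ N) {Q : X → U → ℝ} {p : X × U} {m v K : ℝ}
    (hv : 0 ≤ v) (hK : 0 ≤ K)
    (h : ∑ i ∈ range N, (hatOp γ (R i) (Z i) Q p.1 p.2 - m) ^ 2 ≤ 2 * (N - 1) * v + K) :
    √(sigHat γ N R Z Q p) ≤ √2 * √v + √(K / (N - 1)) := by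
  have hN1 : (0 : ℝ) < N - 1 := by
    have : (2 : ℝ) ≤ N := by exact_mod_cast hN
    linarith
  calc √(sigHat γ N R Z Q p)
      ≤ √(2 * v + K / (N - 1)) := by
        refine sqrt_le_sqrt ((sigHat_le_sum_sq_div hN Q p m).trans ?_)
        rw [div_le_iff₀ hN1, add_mul, div_mul_cancel₀ _ hN1.ne']
        linarith
    _ ≤ √2 * √v + √(K / (N - 1)) := by
        rw [← sqrt_mul zero_le_two]
        exact sqrt_add_le_sqrt_add_sqrt (by positivity) (by positivity)

lemma sqrt_sigHatNorm_le_of_sum_sq_le [Nonempty X] [Nonempty U] (hγ : 0 ≤ γ) (hγ1 : γ ≤ 1)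
    (hZ : ∀ i, IsKernel (Z i)) (hN : 2 ≤ N) {Q' : X → U → ℝ} {v b L : ℝ} (hv : 0 ≤ v)
    (hb : 0 ≤ b) (hL : 0 ≤ L)
    (h : ∀ p : X × U, ∑ i ∈ range N, (hatOp γ (R i) (Z i) Q' p.1 p.2 - Q' p.1 p.2) ^ 2 ≤
      2 * (N - 1) * v + 16 * b ^ 2 * L) (Q : X → U → ℝ) :
    √(sigHatNorm γ N R Z Q) ≤ √2 * √v + b * √(16 * L / (N - 1)) + √8 * ‖Q - Q'‖ := by
  refine sqrt_sigHatNorm_le fun p => (sqrt_sigHat_le_add hγ hZ hN Q Q' p).trans ?_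
  have hstar := sqrt_sigHat_le_of_sum_sq_le hN hv (by positivity) (h p)
  rw [show 16 * b ^ 2 * L / (N - 1) = b ^ 2 * (16 * L / (N - 1)) by ring, sqrt_mul (sq_nonneg b),
    sqrt_sq hb] at hstar
  have hlip : √2 * (γ * ‖Q - Q'‖) ≤ √8 * ‖Q - Q'‖ :=
    calc √2 * (γ * ‖Q - Q'‖) ≤ √2 * (1 * ‖Q - Q'‖) := by gcongr
      _ ≤ √8 * ‖Q - Q'‖ := by rw [one_mul]; gcongr; norm_num
  linarith

end SampleVariance

lemma IsIIDGenSamplesQ.measureReal_lt_sum_sq_le {Ω : Type*} [MeasurableSpace Ω]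
    {μ : Measure Ω} [IsProbabilityMeasure μ] [Fintype X] [Fintype U] [Nonempty X] [Nonempty U]
    {P : U → X → X → ℝ} {r : X → U → ℝ} {σr : ℝ} {R : ℕ → Ω → X → U → ℝ}
    {Z : ℕ → Ω → U → X → X → ℝ} (hiid : IsIIDGenSamplesQ μ P r σr R Z) (hP : IsKernel P)
    {γ : ℝ} (hγ : 0 ≤ γ) {Q : X → U → ℝ} (hQ : bellOpt γ P r Q = Q) {N : ℕ} (hN : 2 ≤ N)
    {L : ℝ} (hL : 0 < L) (p : X × U) :
    μ.real {ω | 2 * (N - 1) * SigmaStarQ μ γ (R 0) (Z 0) Q p p + 16 * bFunQ γ σr Q ^ 2 * L <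
      ∑ i ∈ range N, (hatOp γ (R i ω) (Z i ω) Q p.1 p.2 - Q p.1 p.2) ^ 2} ≤ exp (-L) := by
  set g : (X → U → ℝ) × (U → X → X → ℝ) → ℝ := fun s => (hatOp γ s.1 s.2 Q p.1 p.2 - Q p.1 p.2) ^ 2
  have hg : Measurable g := by simp only [g, hatOp]; fun_prop
  have hsample : ∀ i, Measurable fun ω => (R i ω, Z i ω) := fun i =>
    (hiid.gen i).measurable_R.prodMk (hiid.gen i).measurable_Z
  have hσr := (hiid.gen 0).noise_nonneg
  have hbound : ∀ i, ∀ᵐ ω ∂μ, g (R i ω, Z i ω) ∈ Set.Icc 0 ((2 * bFunQ γ σr Q) ^ 2) := fun i => by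
    filter_upwards [(hiid.gen i).ae_isKernel, (hiid.gen i).bound_R] with ω hZ hR
    have hdev := abs_hatOp_sub_bellOpt_le hγ hP hZ hR Q p.1 p.2
    rw [hQ] at hdev
    have hdev' : |hatOp γ (R i ω) (Z i ω) Q p.1 p.2 - Q p.1 p.2| ≤ 2 * bFunQ γ σr Q :=
      hdev.trans (by unfold bFunQ; linarith)
    exact ⟨sq_nonneg _, (sq_abs _).symm.le.trans (pow_le_pow_left₀ (abs_nonneg _) hdev' 2)⟩
  have hmean : ∀ i, ∫ ω, g (R i ω, Z i ω) ∂μ = SigmaStarQ μ γ (R 0) (Z 0) Q p p := fun i => by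
    rw [(hiid.gen 0).sigmaStarQ_apply_self hP hQ p]
    exact ((hiid.ident i 0).comp hg).integral_eq
  rw [show 16 * bFunQ γ σr Q ^ 2 * L = 4 * (2 * bFunQ γ σr Q) ^ 2 * L by ring]
  exact measureReal_lt_sum_le_exp_neg (fun i => hg.comp (hsample i))
    (hiid.indep.comp _ fun _ => hg) hbound hmean hN hL

theorem empirical_diag_bounded_by_population_general
    {Ω : Type*} [MeasurableSpace Ω] (μ : Measure Ω) [IsProbabilityMeasure μ]
    [Fintype X] [Fintype U] [Nonempty X] [Nonempty U]
    (γ : ℝ) (hγ : γ ∈ Set.Ioo (0 : ℝ) 1)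
    (P : U → X → X → ℝ) (hP : IsKernel P)
    (r : X → U → ℝ) (σr : ℝ)
    (Qstar : X → U → ℝ) (hQstar : bellOpt γ P r Qstar = Qstar)
    (δ : ℝ) (hδ : δ ∈ Set.Ioo (0 : ℝ) 1)
    (N : ℕ) (hN : 2 ≤ N)
    (R : ℕ → Ω → X → U → ℝ) (Z : ℕ → Ω → U → X → X → ℝ)
    (hiid : IsIIDGenSamplesQ μ P r σr R Z) :
    ENNReal.ofReal (1 - δ) ≤
      μ {ω | ∀ Q : X → U → ℝ,
        Real.sqrt (sigHatNorm γ N (fun i => R i ω) (fun i => Z i ω) Q) ≤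
          Real.sqrt 2 * Real.sqrt (diagNormI (SigmaStarQ μ γ (R 0) (Z 0) Qstar)) +
            bFunQ γ σr Qstar *
              Real.sqrt (16 * Real.log ((Fintype.card (X × U) : ℝ) / δ) / ((N : ℝ) - 1)) +
            Real.sqrt 8 * ‖Q - Qstar‖} := by
  obtain ⟨hγ0, hγ1⟩ := hγ
  obtain ⟨hδ0, hδ1⟩ := hδ
  set D : ℝ := (Fintype.card (X × U) : ℝ)
  set L := log (D / δ)
  set b := bFunQ γ σr Qstar
  set Sstar := SigmaStarQ μ γ (R 0) (Z 0) Qstar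
  have hD : 1 ≤ D := Nat.one_le_cast.2 Fintype.card_pos
  have hL : 0 < L := log_pos ((one_lt_div hδ0).2 (by linarith))
  refine ofReal_one_sub_le_measure_of_union_bound (A := fun p : X × U =>
    {ω | 2 * (N - 1) * Sstar p p + 16 * b ^ 2 * L <
      ∑ i ∈ range N, (hatOp γ (R i ω) (Z i ω) Qstar p.1 p.2 - Qstar p.1 p.2) ^ 2})
    (fun p => ?_) ?_
  · rw [show δ / D = exp (-L) by rw [exp_neg, exp_log (by positivity), inv_div]]
    exact hiid.measureReal_lt_sum_sq_le hP hγ0.le hQstar hN hL p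
  filter_upwards [ae_all_iff.2 fun i => (hiid.gen i).ae_isKernel] with ω hZ hgood Q
  refine sqrt_sigHatNorm_le_of_sum_sq_le hγ0.le hγ1.le hZ hN
    ((abs_nonneg _).trans (abs_le_diagNormI Sstar (Classical.arbitrary _)))
    (add_nonneg (hiid.gen 0).noise_nonneg (by positivity)) hL.le (fun p => ?_) Q
  have hp : ω ∉ _ := fun h => hgood (Set.mem_iUnion.2 ⟨p, h⟩)
  rw [Set.notMem_ofPred_iff, not_lt] at hp
  have hN1 : (0 : ℝ) ≤ 2 * (N - 1) := by
    have : (2 : ℝ) ≤ N := by exact_mod_cast hN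
    linarith
  exact hp.trans (add_le_add (mul_le_mul_of_nonneg_left
    ((le_abs_self _).trans (abs_le_diagNormI Sstar p)) hN1) le_rfl)

/-- **Lemma (Statement 18).** With probability at least `1 - δ`, simultaneously for every
`Q`: `‖σ̂_N(Q)‖_diag^{1/2} ≤ √2 ‖Σ*(Q*)‖_diag^{1/2} + b(Q*)·√(16 log(D/δ)/(N-1))
+ √8 ‖Q - Q*‖_∞`. -/
theorem empirical_diag_bounded_by_population
    {Ω : Type*} [MeasurableSpace Ω] (μ : Measure Ω) [IsProbabilityMeasure μ]
    [Fintype X] [Fintype U] [Nonempty X] [Nonempty U]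
    (γ : ℝ) (hγ : γ ∈ Set.Ioo (0 : ℝ) 1)
    (P : U → X → X → ℝ) (hP : IsKernel P)
    (r : X → U → ℝ) (σr : ℝ) (hσr : 0 ≤ σr)
    (Qstar : X → U → ℝ) (hQstar : bellOpt γ P r Qstar = Qstar)
    (δ : ℝ) (hδ : δ ∈ Set.Ioo (0 : ℝ) 1)
    (N : ℕ) (hN : 2 ≤ N)
    (R : ℕ → Ω → X → U → ℝ) (Z : ℕ → Ω → U → X → X → ℝ)
    (hiid : IsIIDGenSamplesQ μ P r σr R Z) :
    ENNReal.ofReal (1 - δ) ≤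
      μ {ω | ∀ Q : X → U → ℝ,
        Real.sqrt (sigHatNorm γ N (fun i => R i ω) (fun i => Z i ω) Q) ≤
          Real.sqrt 2 * Real.sqrt (diagNormI (SigmaStarQ μ γ (R 0) (Z 0) Qstar)) +
            bFunQ γ σr Qstar *
              Real.sqrt (16 * Real.log ((Fintype.card (X × U) : ℝ) / δ) / ((N : ℝ) - 1)) +
            Real.sqrt 8 * ‖Q - Qstar‖} :=
  empirical_diag_bounded_by_population_general μ γ hγ P hP r σr Qstar hQstar δ hδ N hN R Z hiid
end
end
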